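/- Let t be a target distribution with finite or countably infinite support of cardinality n, and let M be a positive integer with M < n. Let p be an M-type distribution minimizing D(q‖t) over all M-type distributions q, and let k be the support size of p. Then D(p‖t) < (1/2) · (r log r / (r − 1)) · (k/(2M) + 2 T_k), where r = 1/(1 − T_k) + e/t_1. -/

import Mathlib

/-- A target distribution: a probability distribution on the positive integers
(indexed here by ℕ) with nonincreasing entries. -/
def IsTargetDist (t : ℕ → ℝ) : Prop :=
  (∀ i, 0 ≤ t i) ∧ (∀ i, t (i + 1) ≤ t i) ∧ HasSum t 1

/-- An `M`-type distribution: every entry is `c_i / M` for a nonnegative integer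
`c_i ≤ M`, and the entries sum to one. -/
def IsMType (M : ℕ) (p : ℕ → ℝ) : Prop :=
  HasSum p 1 ∧ ∃ c : ℕ → ℕ, (∀ i, c i ≤ M) ∧ ∀ i, p i = (c i : ℝ) / M

open Classical in
/-- Informational divergence `D(p‖t) = Σ_{i : p_i > 0} p_i log(p_i / t_i)`
(natural log), valued in the extended reals: it is `⊤` if `p` puts mass where
`t` does not. -/
noncomputable def klE (p t : ℕ → ℝ) : EReal :=
  if ∀ i, 0 < p i → 0 < t i then
    (((∑' i, if 0 < p i then p i * Real.log (p i / t i) else 0 : ℝ) : EReal))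
  else ⊤

/-- Tail mass `T_k = Σ_{i > k} t_i` (the first `k` indices are `0, …, k−1`). -/
noncomputable def tailMass (t : ℕ → ℝ) (k : ℕ) : ℝ := ∑' i, t (k + i)

/-!
Optimality of `p` is exploited through one local move: shifting all the mass of an atom `j` onto
an atom `i` keeps `p` of type `M`, so it cannot decrease `D(p‖t)`. Merging an atom into atom `0`
and using the strict convexity of `x log x` bounds every likelihood ratio by `p i / t i < e / t 0`;
moving an atom onto an empty one shows that the support `S` of `p` carries the `k` largest values
of `t`, hence `∑_S t ≥ 1 - T_k`. The competitor `q` is the largest-remainder rounding of the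
conditional distribution `t / ∑_S t` to multiples of `1 / M`; its ratios satisfy
`q i / t i < 1 / (1 - T_k) + e / t 0 = r`, and its positive excess over `t` is at most
`k / (4M) + T_k`. Since `x ↦ x log x / (x - 1)` increases on `(1, ∞)`, every term of `D(q‖t)` is at
most `r log r / (r - 1)` times the positive part of `q i - t i`, strictly so where `q i > t i`.
-/

open Real Finset

lemma mul_log_div_sub_mul_log_div_lt {τ a b : ℝ} (hτ : 0 < τ) (ha : 0 ≤ a) (hab : a < b) :
    b * log (b / τ) - a * log (a / τ) < (b - a) * (log (b / τ) + 1) := by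
  have hb : 0 < b := ha.trans_lt hab
  rcases ha.eq_or_lt with rfl | ha
  · simp only [zero_mul, sub_zero]
    nlinarith
  have hlog : log (b / τ) - log (a / τ) = log (b / a) := by
    rw [log_div hb.ne' hτ.ne', log_div ha.ne' hτ.ne', log_div hb.ne' ha.ne']
    ring
  have hba : log (b / a) < b / a - 1 :=
    log_lt_sub_one_of_pos (div_pos hb ha) (div_ne_one_of_ne hab.ne')
  have : a * log (b / a) < b - a := by
    calc a * log (b / a) < a * (b / a - 1) := mul_lt_mul_of_pos_left hba ha
      _ = b - a := by field_simp
  rw [← hlog] at this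
  linarith

lemma strictMonoOn_mul_log_div_sub_one :
    StrictMonoOn (fun x : ℝ => x * log x / (x - 1)) (Set.Ioi 1) := by
  have hderiv : ∀ x ∈ Set.Ioi (1 : ℝ), HasDerivAt (fun x : ℝ => x * log x / (x - 1))
      (((log x + 1) * (x - 1) - x * log x * 1) / (x - 1) ^ 2) x := fun x (hx : 1 < x) =>
    (hasDerivAt_mul_log (by linarith)).div ((hasDerivAt_id x).sub_const 1) (by linarith)
  refine strictMonoOn_of_deriv_pos (convex_Ioi 1)
    (fun x hx => (hderiv x hx).continuousAt.continuousWithinAt) fun x hx => ?_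
  rw [interior_Ioi] at hx
  have hx1 : (1 : ℝ) < x := hx
  rw [(hderiv x hx).deriv]
  have hlog : log x < x - 1 := log_lt_sub_one_of_pos (by linarith) hx1.ne'
  exact div_pos (by nlinarith) (pow_pos (by linarith) 2)

lemma mul_log_div_lt_of_lt_of_lt {τ w r : ℝ} (hτ : 0 < τ) (hτw : τ < w) (hwr : w < r * τ) :
    w * log (w / τ) < r * log r / (r - 1) * (w - τ) := by
  obtain ⟨x, rfl⟩ : ∃ x, w = τ * x := ⟨w / τ, by field_simp⟩
  have hx1 : 1 < x := by nlinarith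
  have hxr : x < r := by nlinarith
  have hg := strictMonoOn_mul_log_div_sub_one hx1 (hx1.trans hxr) hxr
  have hg' : x * log x < r * log r / (r - 1) * (x - 1) := by
    rwa [div_lt_iff₀ (by linarith)] at hg
  calc τ * x * log (τ * x / τ) = τ * (x * log x) := by rw [mul_div_cancel_left₀ x hτ.ne']; ring
    _ < τ * (r * log r / (r - 1) * (x - 1)) := mul_lt_mul_of_pos_left hg' hτ
    _ = r * log r / (r - 1) * (τ * x - τ) := by ring

lemma mul_log_div_le_mul_max {τ w r : ℝ} (hτ : 0 < τ) (hw : 0 ≤ w) (hwr : w < r * τ) :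
    w * log (w / τ) ≤ r * log r / (r - 1) * max (w - τ) 0 := by
  rcases le_or_gt w τ with hwτ | hτw
  · rw [max_eq_right (sub_nonpos.2 hwτ), mul_zero]
    exact mul_nonpos_of_nonneg_of_nonpos hw
      (log_nonpos (div_nonneg hw hτ.le) ((div_le_one hτ).2 hwτ))
  · rw [max_eq_left (sub_nonneg.2 hτw.le)]
    exact (mul_log_div_lt_of_lt_of_lt hτ hτw hwr).le

lemma Finset.sum_mul_log_div_lt {ι : Type*} {S : Finset ι} {q t : ι → ℝ} {r B : ℝ}
    (ht : ∀ i ∈ S, 0 < t i) (hq : ∀ i ∈ S, 0 ≤ q i) (hqr : ∀ i ∈ S, q i < r * t i)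
    (hlt : ∑ i ∈ S, t i < ∑ i ∈ S, q i) (hB : ∑ i ∈ S, max (q i - t i) 0 ≤ B) :
    ∑ i ∈ S, q i * log (q i / t i) < r * log r / (r - 1) * B := by
  obtain ⟨i, hi, hti⟩ := exists_lt_of_sum_lt hlt
  have hr : 1 < r := lt_of_mul_lt_mul_right (by linarith [hqr i hi]) (ht i hi).le
  have hg : 0 ≤ r * log r / (r - 1) :=
    div_nonneg (mul_nonneg (by linarith) (log_nonneg hr.le)) (by linarith)
  calc ∑ i ∈ S, q i * log (q i / t i) < ∑ i ∈ S, r * log r / (r - 1) * max (q i - t i) 0 := by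
        refine sum_lt_sum (fun j hj => mul_log_div_le_mul_max (ht j hj) (hq j hj) (hqr j hj))
          ⟨i, hi, ?_⟩
        rw [max_eq_left (sub_nonneg.2 hti.le)]
        exact mul_log_div_lt_of_lt_of_lt (ht i hi) hti (hqr i hi)
    _ ≤ r * log r / (r - 1) * B := by
        rw [← mul_sum]
        exact mul_le_mul_of_nonneg_left hB hg

lemma Finset.exists_subset_card_eq_forall_le {ι : Type*} [DecidableEq ι] (S : Finset ι)
    (f : ι → ℝ) {h : ℕ} (hh : h ≤ S.card) :
    ∃ U ⊆ S, U.card = h ∧ ∀ u ∈ U, ∀ v ∈ S \ U, f v ≤ f u := by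
  obtain ⟨U, hU, hmax⟩ := exists_max_image (S.powersetCard h) (fun V => ∑ i ∈ V, f i)
    (powersetCard_nonempty.mpr hh)
  obtain ⟨hUS, hUcard⟩ := mem_powersetCard.mp hU
  refine ⟨U, hUS, hUcard, fun u hu v hv => ?_⟩
  obtain ⟨hvS, hvU⟩ := mem_sdiff.mp hv
  have hv' : v ∉ U.erase u := fun h => hvU (mem_of_mem_erase h)
  have hswap : insert v (U.erase u) ∈ S.powersetCard h := by
    refine mem_powersetCard.mpr ⟨insert_subset hvS ((erase_subset u U).trans hUS), ?_⟩
    rw [card_insert_of_notMem hv', card_erase_of_mem hu, hUcard]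
    have := card_pos.mpr ⟨u, hu⟩
    omega
  have := hmax _ hswap
  rw [sum_insert hv', ← add_sum_erase U f hu] at this
  linarith

lemma Finset.card_mul_sum_le_card_mul_sum {ι : Type*} [DecidableEq ι] {S U : Finset ι}
    {f : ι → ℝ} (hUS : U ⊆ S) (hf : ∀ u ∈ U, ∀ v ∈ S \ U, f v ≤ f u) :
    (U.card : ℝ) * ∑ i ∈ S, f i ≤ S.card * ∑ i ∈ U, f i := by
  have hcross : (U.card : ℝ) * ∑ v ∈ S \ U, f v ≤ (S \ U).card * ∑ u ∈ U, f u := by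
    calc (U.card : ℝ) * ∑ v ∈ S \ U, f v = ∑ v ∈ S \ U, ∑ _u ∈ U, f v := by
          simp only [sum_const, nsmul_eq_mul, mul_sum]
      _ ≤ ∑ _v ∈ S \ U, ∑ u ∈ U, f u :=
          sum_le_sum fun v hv => sum_le_sum fun u hu => hf u hu v hv
      _ = (S \ U).card * ∑ u ∈ U, f u := by simp only [sum_const, nsmul_eq_mul]
  rw [card_sdiff_of_subset hUS, Nat.cast_sub (card_le_card hUS)] at hcross
  rw [← sum_sdiff hUS]
  nlinarith

lemma Finset.sum_le_sum_of_card_eq_of_forall_le {ι : Type*} [DecidableEq ι] {R S : Finset ι}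
    {f : ι → ℝ} (hcard : R.card = S.card) (hf : ∀ i ∈ R \ S, ∀ j ∈ S \ R, f i ≤ f j) :
    ∑ i ∈ R, f i ≤ ∑ i ∈ S, f i := by
  have hsdiff := card_sdiff_comm hcard
  suffices ∑ i ∈ R \ S, f i ≤ ∑ i ∈ S \ R, f i by
    rw [← sum_inter_add_sum_sdiff R S, ← sum_inter_add_sum_sdiff S R, inter_comm]
    linarith
  rcases (S \ R).eq_empty_or_nonempty with hSR | hSR
  · rw [hSR, card_empty, card_eq_zero] at hsdiff
    rw [hsdiff, hSR]
  · calc ∑ i ∈ R \ S, f i ≤ (R \ S).card • (S \ R).inf' hSR f :=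
          sum_le_card_nsmul _ _ _ fun i hi => le_inf' _ _ fun j hj => hf i hi j hj
      _ ≤ ∑ i ∈ S \ R, f i := hsdiff ▸ card_nsmul_le_sum _ _ _ fun j hj => inf'_le _ hj

lemma Finset.add_le_add_of_sum_le_sum {ι : Type*} [DecidableEq ι] {F : Finset ι} {f g : ι → ℝ}
    {a b : ι} (ha : a ∈ F) (hb : b ∈ F) (hab : a ≠ b) (hfg : ∀ i ∈ F, i ≠ a → i ≠ b → f i = g i)
    (hle : ∑ i ∈ F, f i ≤ ∑ i ∈ F, g i) : f a + f b ≤ g a + g b := by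
  have hb' : b ∈ F.erase a := mem_erase.2 ⟨hab.symm, hb⟩
  rw [← add_sum_erase F f ha, ← add_sum_erase _ f hb', ← add_sum_erase F g ha,
    ← add_sum_erase _ g hb', sum_congr rfl fun i hi =>
      hfg i (mem_of_mem_erase (mem_of_mem_erase hi)) (ne_of_mem_erase (mem_of_mem_erase hi))
        (ne_of_mem_erase hi)] at hle
  linarith

/-- Largest-remainder rounding: round down every `x i`, then round up the `h` entries with the
largest fractional parts. Those parts sum to at least `h² / k` (`k = S.card`), so the total
upward error is at most `h - h² / k ≤ k / 4`. -/
lemma Finset.exists_nat_round {ι : Type*} [DecidableEq ι] (S : Finset ι) (x : ι → ℝ) (M : ℕ)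
    (hx : ∀ i ∈ S, 0 ≤ x i) (hsum : ∑ i ∈ S, x i = M) :
    ∃ c : ι → ℕ, ∑ i ∈ S, c i = M ∧ (∀ i ∈ S, (c i : ℝ) ≤ x i + 1) ∧
      ∑ i ∈ S, max ((c i : ℝ) - x i) 0 ≤ S.card / 4 := by
  set n : ι → ℕ := fun i => ⌊x i⌋₊
  set fr : ι → ℝ := fun i => x i - n i
  have hfr0 : ∀ i ∈ S, 0 ≤ fr i := fun i hi => sub_nonneg.2 (Nat.floor_le (hx i hi))
  have hfr1 : ∀ i, fr i < 1 := fun i => by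
    have := Nat.lt_floor_add_one (x i)
    simp only [fr, n]
    linarith
  have hn_le : (∑ i ∈ S, n i : ℝ) ≤ M := by
    rw [← hsum]; exact sum_le_sum fun i hi => Nat.floor_le (hx i hi)
  set h := M - ∑ i ∈ S, n i with hh_def
  have hh : ((∑ i ∈ S, n i : ℕ) : ℝ) + h = M := by
    rw [hh_def, Nat.cast_sub (by exact_mod_cast hn_le)]; push_cast; ring
  have hfr_sum : ∑ i ∈ S, fr i = h := by
    simp only [fr, sum_sub_distrib, hsum]; push_cast at hh; linarith
  have hhk : h ≤ S.card := by
    have : (h : ℝ) ≤ S.card := by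
      rw [← hfr_sum, card_eq_sum_ones, Nat.cast_sum, Nat.cast_one]
      exact sum_le_sum fun i _ => (hfr1 i).le
    exact_mod_cast this
  obtain ⟨U, hUS, hUcard, hUtop⟩ := S.exists_subset_card_eq_forall_le fr hhk
  set c : ι → ℕ := fun i => n i + if i ∈ U then 1 else 0
  have hc_in : ∀ i ∈ U, (c i : ℝ) - x i = 1 - fr i := fun i hi => by
    simp only [c, fr, hi, if_true]; push_cast; ring
  have hc_out : ∀ i ∉ U, (c i : ℝ) - x i = -fr i := fun i hi => by
    simp only [c, fr, hi, if_false]; push_cast; ring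
  refine ⟨c, ?_, fun i hi => ?_, ?_⟩
  · rw [sum_add_distrib, sum_ite_mem, inter_eq_right.2 hUS, sum_const, hUcard, smul_eq_mul,
      mul_one]
    exact_mod_cast hh
  · by_cases hiU : i ∈ U
    · linarith [hc_in i hiU, hfr0 i hi]
    · linarith [hc_out i hiU, hfr0 i hi]
  · have hsplit : ∑ i ∈ S, max ((c i : ℝ) - x i) 0 = h - ∑ i ∈ U, fr i := by
      rw [← sum_subset hUS fun i hiS hiU => by
          rw [hc_out i hiU, max_eq_right (neg_nonpos.2 (hfr0 i hiS))],
        sum_congr rfl fun i hi => by rw [hc_in i hi, max_eq_left (sub_nonneg.2 (hfr1 i).le)],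
        sum_sub_distrib, sum_const, hUcard, nsmul_one]
    have havg := card_mul_sum_le_card_mul_sum hUS hUtop
    rw [hfr_sum, hUcard] at havg
    have hA : 0 ≤ ∑ i ∈ U, fr i := sum_nonneg fun i hi => hfr0 i (hUS hi)
    have hhk' : (h : ℝ) ≤ S.card := by exact_mod_cast hhk
    rw [hsplit]
    rcases (Nat.cast_nonneg S.card : (0 : ℝ) ≤ S.card).eq_or_lt with hk | hk
    · rw [← hk] at hhk' ⊢
      linarith [Nat.cast_nonneg (α := ℝ) h]
    · rw [le_div_iff₀ (by norm_num : (0 : ℝ) < 4), ← mul_le_mul_iff_of_pos_left hk]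
      nlinarith [sq_nonneg ((S.card : ℝ) - 2 * h)]

namespace IsMType

variable {M : ℕ} {p : ℕ → ℝ}

lemma pos (hp : IsMType M p) : 0 < M := by
  obtain ⟨hsum, c, -, hc⟩ := hp
  refine Nat.pos_of_ne_zero fun hM => ?_
  have hp0 : p = fun _ => 0 := funext fun i => by simp [hc, hM]
  exact one_ne_zero (hsum.unique (hp0 ▸ hasSum_zero))

lemma nonneg (hp : IsMType M p) (i : ℕ) : 0 ≤ p i := by
  obtain ⟨-, c, -, hc⟩ := hp
  rw [hc]
  positivity

lemma inv_le (hp : IsMType M p) {i : ℕ} (hi : 0 < p i) : (M : ℝ)⁻¹ ≤ p i := by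
  obtain ⟨-, c, -, hc⟩ := hp
  rw [hc] at hi ⊢
  have : (1 : ℝ) ≤ c i := by
    exact_mod_cast Nat.one_le_iff_ne_zero.2 fun h => by simp [h] at hi
  rw [inv_eq_one_div]
  gcongr

lemma sum_le_one (hp : IsMType M p) (S : Finset ℕ) : ∑ i ∈ S, p i ≤ 1 :=
  sum_le_hasSum S (fun i _ => hp.nonneg i) hp.1

lemma sum_eq_one (hp : IsMType M p) {S : Finset ℕ} (hS : ∀ i, 0 < p i → i ∈ S) :
    ∑ i ∈ S, p i = 1 :=
  (hasSum_sum_of_ne_finset_zero fun i hi =>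
    le_antisymm (not_lt.1 fun h => hi (hS i h)) (hp.nonneg i)).unique hp.1

lemma card_le (hp : IsMType M p) {S : Finset ℕ} (hS : ∀ i ∈ S, 0 < p i) : S.card ≤ M := by
  have hM : (0 : ℝ) < M := Nat.cast_pos.2 hp.pos
  have : (S.card : ℝ) * (M : ℝ)⁻¹ ≤ 1 := by
    calc (S.card : ℝ) * (M : ℝ)⁻¹ = ∑ _i ∈ S, (M : ℝ)⁻¹ := by rw [sum_const, nsmul_eq_mul]
      _ ≤ ∑ i ∈ S, p i := sum_le_sum fun i hi => hp.inv_le (hS i hi)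
      _ ≤ 1 := hp.sum_le_one S
  rw [← div_eq_mul_inv, div_le_one hM] at this
  exact_mod_cast this

lemma finite_support (hp : IsMType M p) : {i | 0 < p i}.Finite := by
  by_contra hinf
  obtain ⟨S, hS, hcard⟩ := Set.Infinite.exists_subset_card_eq hinf (M + 1)
  have := hp.card_le fun i hi => hS hi
  omega

lemma update_update_add (hp : IsMType M p) {i j : ℕ} (hij : i ≠ j) :
    IsMType M (Function.update (Function.update p j 0) i (p i + p j)) := by
  have hij1 : p i + p j ≤ 1 := by simpa [sum_pair hij] using hp.sum_le_one {i, j}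
  have hM : (0 : ℝ) < M := Nat.cast_pos.2 hp.pos
  obtain ⟨hsum, c, hcM, hc⟩ := hp
  refine ⟨?_, Function.update (Function.update c j 0) i (c i + c j), fun a => ?_, fun a => ?_⟩
  · have := (hsum.update j 0).update i (p i + p j)
    rwa [Function.update_of_ne hij, show p i + p j - p i + (0 - p j + 1) = 1 by ring] at this
  · rw [hc, hc, ← add_div, div_le_one hM] at hij1
    by_cases hai : a = i
    · subst hai; simpa using (by exact_mod_cast hij1 : c a + c j ≤ M)
    by_cases haj : a = j
    · subst haj; simp [hai]
    · simp [hai, haj, hcM a]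
  · by_cases hai : a = i
    · subst hai; simp [hc, add_div]
    by_cases haj : a = j
    · subst haj; simp [hai]
    · simp [hai, haj, hc a]

end IsMType

lemma isMType_ite_div {M : ℕ} (hM : 0 < M) {S : Finset ℕ} {c : ℕ → ℕ} (hc : ∑ i ∈ S, c i = M) :
    IsMType M (fun i => if i ∈ S then (c i : ℝ) / M else 0) := by
  refine ⟨?_, fun i => if i ∈ S then c i else 0, fun i => ?_, fun i => ?_⟩
  · have : HasSum (fun i => if i ∈ S then (c i : ℝ) / M else 0)
        (∑ i ∈ S, if i ∈ S then (c i : ℝ) / M else 0) :=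
      hasSum_sum_of_ne_finset_zero fun i hi => if_neg hi
    rwa [sum_congr rfl fun i hi => if_pos hi, ← sum_div, ← Nat.cast_sum, hc,
      div_self (Nat.cast_pos.2 hM).ne'] at this
  · dsimp only
    split_ifs with hi
    · exact hc ▸ single_le_sum (fun j _ => Nat.zero_le (c j)) hi
    · exact Nat.zero_le M
  · dsimp only
    split_ifs <;> simp

lemma klE_ne_top_iff {p t : ℕ → ℝ} : klE p t ≠ ⊤ ↔ ∀ i, 0 < p i → 0 < t i := by
  unfold klE
  split_ifs with h
  · simpa using h
  · simpa using h

lemma klE_eq_sum {p t : ℕ → ℝ} {F : Finset ℕ} (hp : ∀ i, 0 ≤ p i) (hF : ∀ i, 0 < p i → i ∈ F)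
    (hpt : ∀ i, 0 < p i → 0 < t i) :
    klE p t = ((∑ i ∈ F, p i * log (p i / t i) : ℝ) : EReal) := by
  have hsum : ∑' i, (if 0 < p i then p i * log (p i / t i) else 0)
      = ∑ i ∈ F, p i * log (p i / t i) := by
    rw [tsum_eq_sum fun i hi => if_neg fun h => hi (hF i h)]
    refine sum_congr rfl fun i _ => ?_
    split_ifs with h
    · rfl
    · simp [le_antisymm (not_lt.1 h) (hp i)]
  unfold klE
  rw [if_pos hpt, hsum]

lemma sum_range_add_tailMass {t : ℕ → ℝ} (ht : HasSum t 1) (k : ℕ) :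
    ∑ i ∈ range k, t i + tailMass t k = 1 := by
  simp_rw [tailMass, Nat.add_comm k]
  rw [ht.summable.sum_add_tsum_nat_add k, ht.tsum_eq]

lemma IsTargetDist.sum_lt_one {t : ℕ → ℝ} (ht : IsTargetDist t) {M : ℕ} (hn : 0 < t M)
    {S : Finset ℕ} (hS : S.card ≤ M) : ∑ i ∈ S, t i < 1 := by
  obtain ⟨j, hj, hjS⟩ := exists_mem_notMem_of_card_lt_card (s := S) (t := range (M + 1))
    (by rw [card_range]; exact Nat.lt_succ_of_le hS)
  have htj : 0 < t j :=
    hn.trans_le (antitone_nat_of_succ_le ht.2.1 (Nat.lt_succ_iff.1 (mem_range.1 hj)))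
  have := sum_le_hasSum (insert j S) (fun i _ => ht.1 i) ht.2.2
  rw [sum_insert hjS] at this
  linarith

lemma exists_isMType_sum_max_sub_le {M : ℕ} (hM : 0 < M) {t : ℕ → ℝ} (ht : ∀ i, 0 ≤ t i)
    {S : Finset ℕ} (hσ0 : 0 < ∑ i ∈ S, t i) (hσ1 : ∑ i ∈ S, t i ≤ 1) :
    ∃ q, IsMType M q ∧ (∀ i, 0 < q i → i ∈ S) ∧
      (∀ i ∈ S, q i ≤ t i / ∑ j ∈ S, t j + (M : ℝ)⁻¹) ∧
      ∑ i ∈ S, max (q i - t i) 0 ≤ S.card / (4 * M) + (1 - ∑ i ∈ S, t i) := by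
  set σ := ∑ i ∈ S, t i
  have hMr : (0 : ℝ) < M := Nat.cast_pos.2 hM
  obtain ⟨c, hcsum, hcle, hcmax⟩ := S.exists_nat_round (fun i => M * t i / σ) M
    (fun i _ => by have := ht i; positivity)
    (by rw [← sum_div, ← mul_sum, mul_div_assoc, div_self hσ0.ne', mul_one])
  refine ⟨_, isMType_ite_div hM hcsum, fun i hi => ?_, fun i hi => ?_, ?_⟩
  · by_contra h
    simp [h] at hi
  · rw [if_pos hi, div_le_iff₀ hMr]
    calc (c i : ℝ) ≤ M * t i / σ + 1 := hcle i hi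
      _ = (t i / σ + (M : ℝ)⁻¹) * M := by field_simp
  · have hpt : ∀ i ∈ S, max ((if i ∈ S then (c i : ℝ) / M else 0) - t i) 0
        ≤ max ((c i : ℝ) - M * t i / σ) 0 / M + (t i / σ - t i) := fun i hi => by
      have hσt : t i ≤ t i / σ := le_div_self (ht i) hσ0 hσ1
      rw [if_pos hi, ← max_div_div_right hMr.le, zero_div, sub_div, mul_div_assoc,
        mul_div_cancel_left₀ _ hMr.ne']
      exact max_le (by linarith [le_max_left ((c i : ℝ) / M - t i / σ) 0])
        (by linarith [le_max_right ((c i : ℝ) / M - t i / σ) 0])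
    calc _ ≤ ∑ i ∈ S, (max ((c i : ℝ) - M * t i / σ) 0 / M + (t i / σ - t i)) := sum_le_sum hpt
      _ = (∑ i ∈ S, max ((c i : ℝ) - M * t i / σ) 0) / M + (1 - σ) := by
        rw [sum_add_distrib, ← sum_div, sum_sub_distrib, ← sum_div, div_self hσ0.ne']
      _ ≤ S.card / 4 / M + (1 - σ) := by gcongr
      _ = S.card / (4 * M) + (1 - σ) := by rw [div_div]

def IsOptimalMType (M : ℕ) (t p : ℕ → ℝ) : Prop :=
  IsMType M p ∧ ∀ q, IsMType M q → klE p t ≤ klE q t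

namespace IsOptimalMType

variable {M : ℕ} {t p : ℕ → ℝ}

lemma target_pos (hp : IsOptimalMType M t p) {j : ℕ} (hj : 0 < t j) :
    ∀ i, 0 < p i → 0 < t i := by
  have hδ := isMType_ite_div hp.1.pos (S := {j}) (c := fun _ => M) (by simp)
  refine klE_ne_top_iff.1 (ne_top_of_le_ne_top (klE_ne_top_iff.2 fun i hi => ?_) (hp.2 _ hδ))
  by_cases h : i ∈ ({j} : Finset ℕ)
  · rwa [mem_singleton.1 h]
  · simp [h] at hi

lemma mul_log_add_mul_log_le (hp : IsOptimalMType M t p) (hpt : ∀ i, 0 < p i → 0 < t i)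
    {i j : ℕ} (hij : i ≠ j) (hti : 0 < t i) :
    p i * log (p i / t i) + p j * log (p j / t j) ≤ (p i + p j) * log ((p i + p j) / t i) := by
  set q := Function.update (Function.update p j 0) i (p i + p j)
  have hq : IsMType M q := hp.1.update_update_add hij
  have hqa : ∀ a, a ≠ i → a ≠ j → q a = p a := fun a hai haj => by simp [q, hai, haj]
  set F := insert i (insert j hp.1.finite_support.toFinset)
  have hpF : ∀ a, 0 < p a → a ∈ F := fun a ha =>
    mem_insert_of_mem (mem_insert_of_mem (by simpa using ha))
  have hqF : ∀ a, 0 < q a → a ∈ F ∧ 0 < t a := fun a ha => by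
    by_cases hai : a = i
    · subst hai; simp [F, hti]
    by_cases haj : a = j
    · subst haj; simp [q, hai] at ha
    rw [hqa a hai haj] at ha
    exact ⟨hpF a ha, hpt a ha⟩
  have hle := hp.2 q hq
  rw [klE_eq_sum hp.1.nonneg hpF hpt, klE_eq_sum hq.nonneg (fun a ha => (hqF a ha).1)
    (fun a ha => (hqF a ha).2), EReal.coe_le_coe_iff] at hle
  have := add_le_add_of_sum_le_sum (mem_insert_self i _) (mem_insert_of_mem (mem_insert_self j _))
    hij (fun a _ hai haj => by rw [hqa a hai haj]) hle
  simpa [q, hij, hij.symm] using this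

lemma div_lt_exp_div (hp : IsOptimalMType M t p) (hpt : ∀ i, 0 < p i → 0 < t i)
    (ht0 : 0 < t 0) {i : ℕ} (hi : 0 < p i) : p i / t i < exp 1 / t 0 := by
  have hti := hpt i hi
  rcases eq_or_ne i 0 with rfl | hi0
  · have : p 0 ≤ 1 := by simpa using hp.1.sum_le_one {0}
    exact div_lt_div_of_pos_right (this.trans_lt (by simp)) ht0
  have hmove := hp.mul_log_add_mul_log_le hpt hi0.symm ht0
  have hsteep := mul_log_div_sub_mul_log_div_lt ht0 (hp.1.nonneg 0) (lt_add_of_pos_right _ hi)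
  have hsum : p 0 + p i ≤ 1 := by simpa [sum_pair hi0.symm] using hp.1.sum_le_one {0, i}
  have hlog : log ((p 0 + p i) / t 0) ≤ log (1 / t 0) :=
    log_le_log (div_pos (by linarith [hp.1.nonneg 0]) ht0) (div_le_div_of_nonneg_right hsum ht0.le)
  have hexp : log (exp 1 / t 0) = log (1 / t 0) + 1 := by
    rw [log_div (exp_pos 1).ne' ht0.ne', log_div one_ne_zero ht0.ne', log_one, log_exp]
    ring
  have hmul : p i * log (p i / t i) < p i * log (exp 1 / t 0) := by
    rw [hexp]
    nlinarith
  rw [← log_lt_log_iff (div_pos hi hti) (div_pos (exp_pos 1) ht0)]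
  exact lt_of_mul_lt_mul_left hmul hi.le

lemma target_le_of_not_pos_of_pos (hp : IsOptimalMType M t p) (hpt : ∀ i, 0 < p i → 0 < t i)
    {i j : ℕ} (hi : ¬0 < p i) (hj : 0 < p j) : t i ≤ t j := by
  have hpi : p i = 0 := le_antisymm (not_lt.1 hi) (hp.1.nonneg i)
  have htj := hpt j hj
  by_contra! hlt
  have hti : 0 < t i := htj.trans hlt
  have hij : i ≠ j := by rintro rfl; exact hi hj
  have hmove := hp.mul_log_add_mul_log_le hpt hij hti
  rw [hpi, zero_mul, zero_add, zero_add] at hmove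
  have := le_of_mul_le_mul_left hmove hj
  rw [log_le_log_iff (div_pos hj htj) (div_pos hj hti),
    div_le_div_iff_of_pos_left hj htj hti] at this
  linarith

lemma one_sub_tailMass_le (hp : IsOptimalMType M t p) (hpt : ∀ i, 0 < p i → 0 < t i)
    (ht : HasSum t 1) {S : Finset ℕ} (hS : ∀ i, i ∈ S ↔ 0 < p i) :
    1 - tailMass t S.card ≤ ∑ i ∈ S, t i := by
  rw [← sum_range_add_tailMass ht S.card, add_sub_cancel_right]
  exact sum_le_sum_of_card_eq_of_forall_le (card_range _) fun i hi j hj =>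
    hp.target_le_of_not_pos_of_pos hpt ((hS i).not.1 (mem_sdiff.1 hi).2)
      ((hS j).1 (mem_sdiff.1 hj).1)

lemma exists_competitor (hp : IsOptimalMType M t p)
    (ht : IsTargetDist t) (hn : 0 < t M) (ht0 : 0 < t 0) (hpt : ∀ i, 0 < p i → 0 < t i)
    {S : Finset ℕ} (hS : ∀ i, i ∈ S ↔ 0 < p i) :
    ∃ q, IsMType M q ∧ (∀ i, 0 < q i → i ∈ S) ∧ ∑ i ∈ S, t i < ∑ i ∈ S, q i ∧
      (∀ i ∈ S, q i < (1 / (1 - tailMass t S.card) + exp 1 / t 0) * t i) ∧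
      ∑ i ∈ S, max (q i - t i) 0 ≤ S.card / (4 * M) + tailMass t S.card := by
  set σ := ∑ i ∈ S, t i
  set Tk := tailMass t S.card
  have hSpos : 0 < S.card := card_pos.2 (nonempty_of_sum_ne_zero
    ((hp.1.sum_eq_one fun i => (hS i).2).symm ▸ one_ne_zero))
  have hhead : 0 < 1 - Tk := by
    rw [← sum_range_add_tailMass ht.2.2 S.card, add_sub_cancel_right]
    exact ht0.trans_le (single_le_sum (fun i _ => ht.1 i) (mem_range.2 hSpos))
  have hσ : 1 - Tk ≤ σ := hp.one_sub_tailMass_le hpt ht.2.2 hS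
  have hσ1 : σ < 1 := ht.sum_lt_one hn (hp.1.card_le fun i => (hS i).1)
  obtain ⟨q, hq, hqS, hqle, hqmax⟩ :=
    exists_isMType_sum_max_sub_le hp.1.pos ht.1 (hhead.trans_le hσ) hσ1.le
  refine ⟨q, hq, hqS, hσ1.trans_eq (hq.sum_eq_one hqS).symm, fun i hi => ?_,
    hqmax.trans (by linarith)⟩
  have hpi := (hS i).1 hi
  calc q i ≤ t i / σ + (M : ℝ)⁻¹ := hqle i hi
    _ ≤ t i / (1 - Tk) + p i :=
      add_le_add (div_le_div_of_nonneg_left (ht.1 i) hhead hσ) (hp.1.inv_le hpi)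
    _ < t i / (1 - Tk) + exp 1 / t 0 * t i := by
      gcongr
      exact (div_lt_iff₀ (hpt i hpi)).1 (hp.div_lt_exp_div hpt ht0 hpi)
    _ = (1 / (1 - Tk) + exp 1 / t 0) * t i := by ring

end IsOptimalMType

theorem stmt18_general (t : ℕ → ℝ) (ht : IsTargetDist t) (M : ℕ)
    (hn : 0 < t M)
    (p : ℕ → ℝ) (hp : IsMType M p)
    (hopt : ∀ q, IsMType M q → klE p t ≤ klE q t) :
    ∀ k : ℕ, ∀ Tk r : ℝ,
      k = Nat.card {i | 0 < p i} → Tk = tailMass t k →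
      r = 1 / (1 - Tk) + Real.exp 1 / t 0 →
      klE p t <
        (((1 / 2) * (r * Real.log r / (r - 1)) *
          ((k : ℝ) / (2 * M) + 2 * Tk) : ℝ) : EReal) := by
  rintro k Tk r hk rfl rfl
  have hopt : IsOptimalMType M t p := ⟨hp, hopt⟩
  have ht0 : 0 < t 0 := hn.trans_le (antitone_nat_of_succ_le ht.2.1 M.zero_le)
  have hpt := hopt.target_pos ht0
  set S := hp.finite_support.toFinset
  have hS : ∀ i, i ∈ S ↔ 0 < p i := fun i => hp.finite_support.mem_toFinset
  obtain rfl : k = S.card := hk.trans (Nat.card_eq_card_finite_toFinset _)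
  obtain ⟨q, hq, hqS, hlt, hqr, hqmax⟩ := hopt.exists_competitor ht hn ht0 hpt hS
  refine (hopt.2 q hq).trans_lt ?_
  rw [klE_eq_sum hq.nonneg hqS fun i hi => hpt i ((hS i).1 (hqS i hi)), EReal.coe_lt_coe_iff]
  calc _ < _ := sum_mul_log_div_lt (fun i hi => hpt i ((hS i).1 hi)) (fun i _ => hq.nonneg i)
        hqr hlt hqmax
    _ = _ := by ring

/-- if `t` has support of cardinality `n > M` (i.e. more than `M`
positive entries: `0 < t M` in 0-based indexing) and `p` is an informational-divergence
optimal `M`-type approximation with support size `k`, then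
`D(p‖t) < (1/2) (r log r/(r−1)) (k/(2M) + 2 T_k)` where `r = 1/(1−T_k) + e/t_1`. -/
theorem stmt18 (t : ℕ → ℝ) (ht : IsTargetDist t) (M : ℕ) (hM : 0 < M)
    (hn : 0 < t M)
    (p : ℕ → ℝ) (hp : IsMType M p)
    (hopt : ∀ q, IsMType M q → klE p t ≤ klE q t) :
    ∀ k : ℕ, ∀ Tk r : ℝ,
      k = Nat.card {i | 0 < p i} → Tk = tailMass t k →
      r = 1 / (1 - Tk) + Real.exp 1 / t 0 →
      klE p t <
        (((1 / 2) * (r * Real.log r / (r - 1)) *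
          ((k : ℝ) / (2 * M) + 2 * Tk) : ℝ) : EReal) :=
  stmt18_general t ht M hn p hp hopt
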